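/- arXiv:1311.5317 — 2 statements merged into one kernel-verified Lean document; each statement's English description precedes it below -/
import Mathlib

section
/- Let G = (V,E) be a graph in which every vertex cut of size less than w must contain at least one vertex from a distinguished set A of 'heavy' vertices, and construct G' by replacing each vertex of A by a clique of w vertices and each edge incident to A (or between two vertices of A) by a complete bipartite subgraph between the corresponding vertex sets. Then for any vertex cut S of G', if S contains some but not all vertices of one of the cliques of size w, then S minus those clique vertices is still a vertex cut of G'. -/
/-!
Pick a clique vertex `k` outside `S`. Adjacency in `G'` only depends on the underlying vertices
of `G`, so every clique vertex has the same closed neighbourhood as `k`, and collapsing the clique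
vertices of `S` onto `k` sends each path avoiding `S \ K` to a path avoiding `S`. Hence
connectivity after deleting `S \ K` would give connectivity after deleting `S`.
-/

def IsVertexCut {α : Type*} (H : SimpleGraph α) (S : Set α) : Prop :=
  ¬ (H.induce Sᶜ).Connected

namespace SimpleGraph

variable {α β : Type*}

theorem Reachable.of_adj_imp_reachable {G : SimpleGraph α} {H : SimpleGraph β} (f : α → β)
    (hf : ∀ x y, G.Adj x y → H.Reachable (f x) (f y)) {x y : α} (h : G.Reachable x y) :
    H.Reachable (f x) (f y) := by
  rw [reachable_iff_reflTransGen] at h ⊢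
  exact h.lift' f fun x y hxy => (reachable_iff_reflTransGen _ _).mp (hf x y hxy)

theorem Connected.induce_diff_of_adj_imp_adj {H : SimpleGraph α} {T D : Set α} {k : α}
    (hT : (H.induce T).Connected) (hk : k ∈ T \ D)
    (hD : ∀ d ∈ D, ∀ y, H.Adj d y → y ≠ k → H.Adj k y) :
    (H.induce (T \ D)).Connected := by
  classical
  let collapse : T → ↥(T \ D) := fun x =>
    if hx : x.1 ∈ D then ⟨k, hk⟩ else ⟨x, x.2, hx⟩
  have collapse_of_notMem {x : T} (hx : x.1 ∉ D) : (collapse x).1 = x := by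
    simp [collapse, hx]
  have collapse_of_mem {x : T} (hx : x.1 ∈ D) : (collapse x).1 = k := by
    simp [collapse, hx]
  have reachable_of_eq_or_adj {u v : ↥(T \ D)} (h : u.1 = v.1 ∨ H.Adj u v) :
      (H.induce (T \ D)).Reachable u v :=
    h.elim (fun h => Subtype.ext h ▸ .rfl) fun h => Adj.reachable (G := H.induce _) h
  have hstep (x y : T) (hxy : H.Adj x y) :
      (H.induce (T \ D)).Reachable (collapse x) (collapse y) := by
    apply reachable_of_eq_or_adj
    by_cases hx : x.1 ∈ D <;> by_cases hy : y.1 ∈ D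
    · exact .inl ((collapse_of_mem hx).trans (collapse_of_mem hy).symm)
    · rw [collapse_of_mem hx, collapse_of_notMem hy]
      exact (eq_or_ne k y.1).imp id fun hyk => hD x hx y hxy hyk.symm
    · rw [collapse_of_notMem hx, collapse_of_mem hy]
      exact (eq_or_ne x.1 k).imp id fun hxk => (hD y hy x hxy.symm hxk).symm
    · rw [collapse_of_notMem hx, collapse_of_notMem hy]
      exact .inr hxy
  have : Nonempty ↥(T \ D) := ⟨⟨k, hk⟩⟩
  refine Connected.mk fun u v => ?_
  have hfix (u : ↥(T \ D)) : collapse ⟨u, u.2.1⟩ = u := Subtype.ext (collapse_of_notMem u.2.2)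
  simpa only [hfix] using
    (hT.preconnected ⟨u, u.2.1⟩ ⟨v, v.2.1⟩).of_adj_imp_reachable collapse hstep

end SimpleGraph

theorem stmt16_general {V : Type*} (G : SimpleGraph V) (A : Set V) (w : ℕ)
    (π : (↥Aᶜ ⊕ (↥A × Fin w)) → V)
    (hπ : π = Sum.elim Subtype.val (fun p => (p.1 : V)))
    (G' : SimpleGraph (↥Aᶜ ⊕ (↥A × Fin w)))
    (hG' : G' = SimpleGraph.fromRel (fun x y => G.Adj (π x) (π y) ∨ π x = π y))
    (S : Set (↥Aᶜ ⊕ (↥A × Fin w))) (hS : IsVertexCut G' S)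
    (a : ↥A) (K : Set (↥Aᶜ ⊕ (↥A × Fin w)))
    (hK : K = {v | ∃ i : Fin w, v = Sum.inr (a, i)})
    (hnotall : ¬ K ⊆ S) :
    IsVertexCut G' (S \ K) := by
  obtain ⟨k, hkK, hkS⟩ := Set.not_subset.mp hnotall
  have hπK : ∀ x ∈ K, π x = a := by
    intro x hx
    obtain ⟨i, rfl⟩ := hK ▸ hx
    simp [hπ]
  have hdom : ∀ d ∈ S ∩ K, ∀ y, G'.Adj d y → y ≠ k → G'.Adj k y := by
    rintro d ⟨-, hdK⟩ y hdy hyk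
    rw [hG', SimpleGraph.fromRel_adj] at hdy ⊢
    rw [hπK k hkK, ← hπK d hdK]
    exact ⟨Ne.symm hyk, hdy.2⟩
  have hcompl : Sᶜ = (S \ K)ᶜ \ (S ∩ K) := by
    ext x
    simp only [Set.mem_compl_iff, Set.mem_sdiff, Set.mem_inter_iff]
    tauto
  intro hconn
  apply hS
  rw [hcompl]
  exact hconn.induce_diff_of_adj_imp_adj ⟨fun h => h.2 hkK, fun h => hkS h.1⟩ hdom

/-- The reduced-vertex-cut argument from the lower-bound construction: blow up
each heavy vertex `a ∈ A` of `G` into a clique of `w` vertices, replacing each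
edge by a complete bipartite subgraph (this is the graph `G'` defined via
`fromRel` below). If a vertex cut `S` of `G'` contains some but not all vertices
of one of the `w`-cliques, then `S` minus those clique vertices is still a
vertex cut of `G'`. -/
theorem stmt16 {V : Type*} (G : SimpleGraph V) (A : Set V) (w : ℕ)
    (hcuts : ∀ S₀ : Set V, IsVertexCut G S₀ → S₀.ncard < w → (S₀ ∩ A).Nonempty)
    (π : (↥Aᶜ ⊕ (↥A × Fin w)) → V)
    (hπ : π = Sum.elim Subtype.val (fun p => (p.1 : V)))
    (G' : SimpleGraph (↥Aᶜ ⊕ (↥A × Fin w)))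
    (hG' : G' = SimpleGraph.fromRel (fun x y => G.Adj (π x) (π y) ∨ π x = π y))
    (S : Set (↥Aᶜ ⊕ (↥A × Fin w))) (hS : IsVertexCut G' S)
    (a : ↥A) (K : Set (↥Aᶜ ⊕ (↥A × Fin w)))
    (hK : K = {v | ∃ i : Fin w, v = Sum.inr (a, i)})
    (hsome : (S ∩ K).Nonempty) (hnotall : ¬ K ⊆ S) :
    IsVertexCut G' (S \ K) :=
  stmt16_general G A w π hπ G' hG' S hS a K hK hnotall
end

section
/- In the lower-bound graph H(X,Y) with parameters h ≥ 2, ℓ ≥ 1, weight w > 4: if X ∩ Y = {z} for a single element z ∈ [h], then the set {a, b, u_z, v_z} is a vertex cut of size 4, and every vertex cut of H(X,Y) that does not contain all four of these vertices contains a vertex of weight w; consequently the minimum (weighted) vertex cut of H(X,Y) has size exactly 4. -/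
/-- Vertices of the lower-bound graph `H(X,Y)`: heavy path vertices `(p,q)` with
`p ∈ {0,…,h}`, `q ∈ [2ℓ]`; the two special vertices `a` (encoded `true`) and `b`
(encoded `false`); and the light vertices `u_x` for `x ∈ X` and `v_y` for `y ∈ Y`. -/
abbrev LBVtx (h ℓ : ℕ) (X Y : Finset (Fin h)) : Type :=
  (Fin (h + 1) × Fin (2 * ℓ)) ⊕ (Bool ⊕ (↥X ⊕ ↥Y))

/-- The edge relation of `H(X,Y)` (to be symmetrized by `SimpleGraph.fromRel`):
path edges `(p,q)–(p,q+1)`; for `x ∈ X`, `u_x` joined to `(0,1)` and `(x,1)`;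
for `x ∉ X`, `(0,1)–(x,1)` directly; symmetrically for `Y` at column `2ℓ`;
`a–b`; `a` joined to all `u_x` and all `(p,q)` with `q` in the left half;
`b` joined to all `v_y` and all `(p,q)` in the right half. (Columns are
0-indexed: the first column is `0` and the last is `2ℓ−1`.) -/
def LBRel (h ℓ : ℕ) (X Y : Finset (Fin h)) :
    LBVtx h ℓ X Y → LBVtx h ℓ X Y → Prop :=
  fun u v =>
  match u, v with
  | .inl (p, q), .inl (p', q') =>
      (p = p' ∧ (q' : ℕ) = (q : ℕ) + 1)
      ∨ ((p : ℕ) = 0 ∧ (q : ℕ) = 0 ∧ (q' : ℕ) = 0 ∧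
          ∃ x : Fin h, (p' : ℕ) = (x : ℕ) + 1 ∧ x ∉ X)
      ∨ ((p : ℕ) = 0 ∧ (q : ℕ) = 2 * ℓ - 1 ∧ (q' : ℕ) = 2 * ℓ - 1 ∧
          ∃ y : Fin h, (p' : ℕ) = (y : ℕ) + 1 ∧ y ∉ Y)
  | .inr (.inl ab), .inr (.inl ab') => ab = true ∧ ab' = false
  | .inr (.inl ab), .inl (_, q) =>
      (ab = true ∧ (q : ℕ) < ℓ) ∨ (ab = false ∧ ℓ ≤ (q : ℕ))
  | .inr (.inl ab), .inr (.inr (.inl _)) => ab = true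
  | .inr (.inl ab), .inr (.inr (.inr _)) => ab = false
  | .inr (.inr (.inl ux)), .inl (p, q) =>
      (q : ℕ) = 0 ∧ ((p : ℕ) = 0 ∨ (p : ℕ) = ((ux : Fin h) : ℕ) + 1)
  | .inr (.inr (.inr vy)), .inl (p, q) =>
      (q : ℕ) = 2 * ℓ - 1 ∧ ((p : ℕ) = 0 ∨ (p : ℕ) = ((vy : Fin h) : ℕ) + 1)
  | _, _ => False

/-- The lower-bound graph `H(X,Y)`. -/
def LBGraph (h ℓ : ℕ) (X Y : Finset (Fin h)) : SimpleGraph (LBVtx h ℓ X Y) :=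
  SimpleGraph.fromRel (LBRel h ℓ X Y)

/-- Vertex weights: heavy path vertices have weight `w`, all others weight `1`. -/
def LBwt (h ℓ w : ℕ) (X Y : Finset (Fin h)) : LBVtx h ℓ X Y → ℕ :=
  fun v => match v with
  | .inl _ => w
  | .inr _ => 1

/-! Row `z+1` of `H(X,Y)` is a path whose only neighbours off the row are `a`, `b`, `u_z` and
`v_z`: the direct edges from `(0,1)` and `(0,2ℓ)` into it are absent because `z ∈ X` and `z ∈ Y`.
Deleting these four vertices therefore cuts the row off from row `0`.

Conversely, suppose a vertex set keeps every heavy vertex `(p,q)`. Each row is then a surviving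
path, and row `x+1` is joined to row `0` by a direct edge at one end when `x ∉ X` or `x ∉ Y`.
For the one row with `x ∈ X ∩ Y = {z}`, any surviving vertex among `a`, `b`, `u_z`, `v_z`
joins it to row `0`, and every light vertex is adjacent to row `0`. So a cut with no heavy vertex
contains all four special vertices, and every cut weighs at least `min 4 w = 4`. -/

theorem SimpleGraph.not_connected_of_adj_closed {V : Type*} {G : SimpleGraph V} (P : V → Prop)
    (hP : ∀ ⦃u v⦄, G.Adj u v → P u → P v) {u v : V} (hu : P u) (hv : ¬ P v) :
    ¬ G.Connected := by
  intro hG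
  obtain ⟨walk⟩ := hG.preconnected u v
  induction walk with
  | nil => exact hv hu
  | cons hadj _ ih => exact ih (hP hadj hu) hv

theorem SimpleGraph.Adj.reachable_induce {V : Type*} {G : SimpleGraph V} {s : Set V}
    {u v : V} (huv : G.Adj u v) (hu : u ∈ s) (hv : v ∈ s) :
    (G.induce s).Reachable ⟨u, hu⟩ ⟨v, hv⟩ :=
  SimpleGraph.Adj.reachable huv

namespace LBGraph

variable {h ℓ : ℕ} {X Y : Finset (Fin h)}

theorem adj_of_rel {u v : LBVtx h ℓ X Y} (hne : u ≠ v) (huv : LBRel h ℓ X Y u v) :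
    (LBGraph h ℓ X Y).Adj u v :=
  ⟨hne, Or.inl huv⟩

theorem adj_col_succ (p : Fin (h + 1)) {q q' : Fin (2 * ℓ)} (hq : (q' : ℕ) = q + 1) :
    (LBGraph h ℓ X Y).Adj (.inl (p, q)) (.inl (p, q')) :=
  adj_of_rel (by simp [Fin.ext_iff]; omega) (Or.inl ⟨rfl, hq⟩)

theorem adj_a_of_lt (p : Fin (h + 1)) {q : Fin (2 * ℓ)} (hq : (q : ℕ) < ℓ) :
    (LBGraph h ℓ X Y).Adj (.inr (.inl true)) (.inl (p, q)) :=
  adj_of_rel (by simp) (Or.inl ⟨rfl, hq⟩)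

theorem adj_b_of_le (p : Fin (h + 1)) {q : Fin (2 * ℓ)} (hq : ℓ ≤ (q : ℕ)) :
    (LBGraph h ℓ X Y).Adj (.inr (.inl false)) (.inl (p, q)) :=
  adj_of_rel (by simp) (Or.inr ⟨rfl, hq⟩)

theorem adj_u (x : X) {p : Fin (h + 1)} (hp : (p : ℕ) = 0 ∨ (p : ℕ) = (x : Fin h) + 1)
    {q : Fin (2 * ℓ)} (hq : (q : ℕ) = 0) :
    (LBGraph h ℓ X Y).Adj (.inr (.inr (.inl x))) (.inl (p, q)) :=
  adj_of_rel (by simp) ⟨hq, hp⟩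

theorem adj_v (y : Y) {p : Fin (h + 1)} (hp : (p : ℕ) = 0 ∨ (p : ℕ) = (y : Fin h) + 1)
    {q : Fin (2 * ℓ)} (hq : (q : ℕ) = 2 * ℓ - 1) :
    (LBGraph h ℓ X Y).Adj (.inr (.inr (.inr y))) (.inl (p, q)) :=
  adj_of_rel (by simp) ⟨hq, hp⟩

theorem adj_first_col_of_not_mem {x : Fin h} (hx : x ∉ X) {q : Fin (2 * ℓ)}
    (hq : (q : ℕ) = 0) :
    (LBGraph h ℓ X Y).Adj (.inl (0, q)) (.inl (x.succ, q)) :=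
  adj_of_rel (by simp [Fin.ext_iff]) (Or.inr (Or.inl ⟨rfl, hq, hq, x, rfl, hx⟩))

theorem adj_last_col_of_not_mem {y : Fin h} (hy : y ∉ Y) {q : Fin (2 * ℓ)}
    (hq : (q : ℕ) = 2 * ℓ - 1) :
    (LBGraph h ℓ X Y).Adj (.inl (0, q)) (.inl (y.succ, q)) :=
  adj_of_rel (by simp [Fin.ext_iff]) (Or.inr (Or.inr ⟨rfl, hq, hq, y, rfl, hy⟩))

theorem eq_of_adj_row_succ {x : Fin h} (hxX : x ∈ X) (hxY : x ∈ Y) {q : Fin (2 * ℓ)}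
    {v : LBVtx h ℓ X Y} (hadj : (LBGraph h ℓ X Y).Adj (.inl (x.succ, q)) v) :
    (∃ q', v = .inl (x.succ, q')) ∨ v = .inr (.inl true) ∨ v = .inr (.inl false) ∨
      v = .inr (.inr (.inl ⟨x, hxX⟩)) ∨ v = .inr (.inr (.inr ⟨x, hxY⟩)) := by
  obtain ⟨-, hr | hr⟩ := hadj <;>
  rcases v with ⟨p', q'⟩ | ab | ⟨x', hx'⟩ | ⟨y', hy'⟩ <;>
  simp only [LBRel] at hr
  all_goals simp [Fin.val_succ, Fin.val_inj] at hr ⊢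
  all_goals aesop

theorem isVertexCut_a_b_u_v (hℓ : 1 ≤ ℓ) {z : Fin h} (hzX : z ∈ X) (hzY : z ∈ Y) :
    IsVertexCut (LBGraph h ℓ X Y) ↑({.inr (.inl true), .inr (.inl false),
      .inr (.inr (.inl ⟨z, hzX⟩)), .inr (.inr (.inr ⟨z, hzY⟩))} : Finset (LBVtx h ℓ X Y)) := by
  let first : Fin (2 * ℓ) := ⟨0, by omega⟩
  have heavy_mem : ∀ p q, (.inl (p, q) : LBVtx h ℓ X Y) ∉ ({.inr (.inl true), .inr (.inl false),
      .inr (.inr (.inl ⟨z, hzX⟩)), .inr (.inr (.inr ⟨z, hzY⟩))} : Finset (LBVtx h ℓ X Y)) := by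
    simp
  refine SimpleGraph.not_connected_of_adj_closed (fun v => ∃ q, v.1 = .inl (z.succ, q)) ?_
    (u := ⟨_, heavy_mem z.succ first⟩) (v := ⟨_, heavy_mem 0 first⟩) ⟨first, rfl⟩ ?_
  · rintro ⟨u, _⟩ ⟨v, hv⟩ hadj ⟨q, rfl⟩
    rcases eq_of_adj_row_succ hzX hzY hadj with hrow | rfl | rfl | rfl | rfl
    · exact hrow
    all_goals simp at hv
  · rintro ⟨q, hq⟩
    simp only [Sum.inl.injEq, Prod.mk.injEq] at hq
    exact z.succ_ne_zero hq.1.symm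

section Induce

variable {T : Set (LBVtx h ℓ X Y)}

theorem reachable_induce_row (hheavy : ∀ p q, (.inl (p, q) : LBVtx h ℓ X Y) ∈ T)
    (p : Fin (h + 1)) (q q' : Fin (2 * ℓ)) :
    ((LBGraph h ℓ X Y).induce T).Reachable
      ⟨.inl (p, q), hheavy p q⟩ ⟨.inl (p, q'), hheavy p q'⟩ := by
  have from_zero : ∀ n (hn : n < 2 * ℓ), ((LBGraph h ℓ X Y).induce T).Reachable
      ⟨.inl (p, ⟨0, q.pos⟩), hheavy _ _⟩ ⟨.inl (p, ⟨n, hn⟩), hheavy _ _⟩ := by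
    intro n
    induction n with
    | zero => exact fun _ => .refl _
    | succ n ih =>
      exact fun hn => (ih (by omega)).trans ((adj_col_succ p rfl).reachable_induce _ _)
  exact (from_zero q q.2).symm.trans (from_zero q' q'.2)

theorem reachable_induce_first_col (hℓ : 1 ≤ ℓ)
    (hheavy : ∀ p q, (.inl (p, q) : LBVtx h ℓ X Y) ∈ T)
    (hspecial : ∀ x (hxX : x ∈ X) (hxY : x ∈ Y), .inr (.inl true) ∈ T ∨
      .inr (.inl false) ∈ T ∨ .inr (.inr (.inl ⟨x, hxX⟩)) ∈ T ∨ .inr (.inr (.inr ⟨x, hxY⟩)) ∈ T)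
    (p : Fin (h + 1)) :
    ((LBGraph h ℓ X Y).induce T).Reachable
      ⟨.inl (p, ⟨0, by omega⟩), hheavy _ _⟩ ⟨.inl (0, ⟨0, by omega⟩), hheavy _ _⟩ := by
  let first : Fin (2 * ℓ) := ⟨0, by omega⟩
  let last : Fin (2 * ℓ) := ⟨2 * ℓ - 1, by omega⟩
  have row := reachable_induce_row hheavy
  have via_first : ∀ c (hc : c ∈ T), (LBGraph h ℓ X Y).Adj c (.inl (p, first)) →
      (LBGraph h ℓ X Y).Adj c (.inl (0, first)) →
      ((LBGraph h ℓ X Y).induce T).Reachable ⟨.inl (p, first), hheavy _ _⟩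
        ⟨.inl (0, first), hheavy _ _⟩ :=
    fun c hc hp h0 => (hp.reachable_induce hc _).symm.trans (h0.reachable_induce hc _)
  have via_last : ∀ c (hc : c ∈ T), (LBGraph h ℓ X Y).Adj c (.inl (p, last)) →
      (LBGraph h ℓ X Y).Adj c (.inl (0, last)) →
      ((LBGraph h ℓ X Y).induce T).Reachable ⟨.inl (p, first), hheavy _ _⟩
        ⟨.inl (0, first), hheavy _ _⟩ :=
    fun c hc hp h0 => ((row p first last).trans (hp.reachable_induce hc _).symm).trans
      ((h0.reachable_induce hc _).trans (row 0 last first))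
  have a_col : (first : ℕ) < ℓ := by change 0 < ℓ; omega
  have b_col : ℓ ≤ (last : ℕ) := by change ℓ ≤ 2 * ℓ - 1; omega
  induction p using Fin.cases with
  | zero => exact .refl _
  | succ x =>
    by_cases hxX : x ∈ X
    · by_cases hxY : x ∈ Y
      · rcases hspecial x hxX hxY with ha | hb | hu | hv
        · exact via_first _ ha (adj_a_of_lt _ a_col) (adj_a_of_lt _ a_col)
        · exact via_last _ hb (adj_b_of_le _ b_col) (adj_b_of_le _ b_col)
        · exact via_first _ hu (adj_u _ (.inr (by simp)) rfl) (adj_u _ (.inl rfl) rfl)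
        · exact via_last _ hv (adj_v _ (.inr (by simp)) rfl) (adj_v _ (.inl rfl) rfl)
      · exact (row _ first last).trans
          (((adj_last_col_of_not_mem hxY rfl).reachable_induce _ _).symm.trans (row 0 last first))
    · exact ((adj_first_col_of_not_mem hxX rfl).reachable_induce _ _).symm

theorem connected_induce (hℓ : 1 ≤ ℓ) (hheavy : ∀ p q, (.inl (p, q) : LBVtx h ℓ X Y) ∈ T)
    (hspecial : ∀ x (hxX : x ∈ X) (hxY : x ∈ Y), .inr (.inl true) ∈ T ∨
      .inr (.inl false) ∈ T ∨ .inr (.inr (.inl ⟨x, hxX⟩)) ∈ T ∨ .inr (.inr (.inr ⟨x, hxY⟩)) ∈ T) :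
    ((LBGraph h ℓ X Y).induce T).Connected := by
  let first : Fin (2 * ℓ) := ⟨0, by omega⟩
  let last : Fin (2 * ℓ) := ⟨2 * ℓ - 1, by omega⟩
  have row := reachable_induce_row hheavy
  have first_col := reachable_induce_first_col hℓ hheavy hspecial
  refine (SimpleGraph.connected_iff_exists_forall_reachable _).2
    ⟨⟨.inl (0, first), hheavy _ _⟩, fun ⟨v, hv⟩ => ?_⟩
  rcases v with ⟨p, q⟩ | (_ | _) | x | y
  · exact (first_col p).symm.trans (row p first q)
  · exact (row 0 first last).trans
      ((adj_b_of_le 0 (show ℓ ≤ 2 * ℓ - 1 by omega)).reachable_induce hv _).symm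
  · exact ((adj_a_of_lt 0 (show 0 < ℓ by omega)).reachable_induce hv _).symm
  · exact ((adj_u x (.inl rfl) rfl).reachable_induce hv _).symm
  · exact (row 0 first last).trans
      ((adj_v y (p := 0) (q := last) (.inl rfl) rfl).reachable_induce hv _).symm

end Induce

end LBGraph

open LBGraph in
theorem stmt17_general (h ℓ w : ℕ) (hℓ : 1 ≤ ℓ) (hw : 4 < w)
    (X Y : Finset (Fin h)) (z : Fin h)
    (hzX : z ∈ X) (hzY : z ∈ Y) (hXY : X ∩ Y = {z}) :
    letI va : LBVtx h ℓ X Y := Sum.inr (Sum.inl true)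
    letI vb : LBVtx h ℓ X Y := Sum.inr (Sum.inl false)
    letI uz : LBVtx h ℓ X Y := Sum.inr (Sum.inr (Sum.inl ⟨z, hzX⟩))
    letI vz : LBVtx h ℓ X Y := Sum.inr (Sum.inr (Sum.inr ⟨z, hzY⟩))
    letI cut : Finset (LBVtx h ℓ X Y) := {va, vb, uz, vz}
    IsVertexCut (LBGraph h ℓ X Y) ↑cut ∧
    (∑ v ∈ cut, LBwt h ℓ w X Y v) = 4 ∧
    (∀ S : Finset (LBVtx h ℓ X Y), IsVertexCut (LBGraph h ℓ X Y) ↑S →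
      ¬ cut ⊆ S → ∃ v ∈ S, LBwt h ℓ w X Y v = w) ∧
    IsLeast {n : ℕ | ∃ S : Finset (LBVtx h ℓ X Y),
      IsVertexCut (LBGraph h ℓ X Y) ↑S ∧ (∑ v ∈ S, LBwt h ℓ w X Y v) = n} 4 := by
  set cut : Finset (LBVtx h ℓ X Y) := {.inr (.inl true), .inr (.inl false),
    .inr (.inr (.inl ⟨z, hzX⟩)), .inr (.inr (.inr ⟨z, hzY⟩))}
  have hcut : IsVertexCut (LBGraph h ℓ X Y) ↑cut := isVertexCut_a_b_u_v hℓ hzX hzY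
  have hsum : ∑ v ∈ cut, LBwt h ℓ w X Y v = 4 := by simp [cut, LBwt]
  have heavy : ∀ S : Finset (LBVtx h ℓ X Y), IsVertexCut (LBGraph h ℓ X Y) ↑S →
      ¬ cut ⊆ S → ∃ v ∈ S, LBwt h ℓ w X Y v = w := by
    intro S hS hsub
    by_contra! hlight
    obtain ⟨c, hc, hcS⟩ := Finset.not_subset.1 hsub
    refine hS (connected_induce hℓ (fun p q hpq => hlight _ hpq rfl) fun x hxX hxY => ?_)
    obtain rfl : x = z := Finset.mem_singleton.1 (hXY ▸ Finset.mem_inter.2 ⟨hxX, hxY⟩)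
    simp only [cut, Finset.mem_insert, Finset.mem_singleton] at hc
    rcases hc with rfl | rfl | rfl | rfl <;> simp [hcS]
  refine ⟨hcut, hsum, heavy, ⟨cut, hcut, hsum⟩, ?_⟩
  rintro n ⟨S, hS, rfl⟩
  by_cases hsub : cut ⊆ S
  · exact hsum ▸ Finset.sum_le_sum_of_subset hsub
  · obtain ⟨v, hvS, hv⟩ := heavy S hS hsub
    exact hw.le.trans (hv.ge.trans (Finset.single_le_sum (fun _ _ => Nat.zero_le _) hvS))

/-- For `X ∩ Y = {z}`, in `H(X,Y)` the set `{a, b, u_z, v_z}` is a vertex cut of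
(weighted) size 4; every vertex cut not containing all four of these vertices
contains a vertex of weight `w`; and consequently the minimum weighted vertex
cut size of `H(X,Y)` is exactly `4`. -/
theorem stmt17 (h ℓ w : ℕ) (hh : 2 ≤ h) (hℓ : 1 ≤ ℓ) (hw : 4 < w)
    (X Y : Finset (Fin h)) (z : Fin h)
    (hzX : z ∈ X) (hzY : z ∈ Y) (hXY : X ∩ Y = {z}) :
    letI va : LBVtx h ℓ X Y := Sum.inr (Sum.inl true)
    letI vb : LBVtx h ℓ X Y := Sum.inr (Sum.inl false)
    letI uz : LBVtx h ℓ X Y := Sum.inr (Sum.inr (Sum.inl ⟨z, hzX⟩))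
    letI vz : LBVtx h ℓ X Y := Sum.inr (Sum.inr (Sum.inr ⟨z, hzY⟩))
    letI cut : Finset (LBVtx h ℓ X Y) := {va, vb, uz, vz}
    IsVertexCut (LBGraph h ℓ X Y) ↑cut ∧
    (∑ v ∈ cut, LBwt h ℓ w X Y v) = 4 ∧
    (∀ S : Finset (LBVtx h ℓ X Y), IsVertexCut (LBGraph h ℓ X Y) ↑S →
      ¬ cut ⊆ S → ∃ v ∈ S, LBwt h ℓ w X Y v = w) ∧
    IsLeast {n : ℕ | ∃ S : Finset (LBVtx h ℓ X Y),
      IsVertexCut (LBGraph h ℓ X Y) ↑S ∧ (∑ v ∈ S, LBwt h ℓ w X Y v) = n} 4 :=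
  stmt17_general h ℓ w hℓ hw X Y z hzX hzY hXY
end
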